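/- arXiv:2003.12369 — 3 statements merged into one kernel-verified Lean document; each statement's English description precedes it below -/
import Mathlib

section
/- Under hypotheses H(A), H(B), H(J), H(f), H(u₀) and (H_s), Problem P_hvi has a unique solution v ∈ C([0,T];V), i.e., there exists exactly one continuous function v: [0,T] → V such that for all t ∈ [0,T] and all w ∈ V: ⟨A v(t) + B(Kv)(t), w⟩ + J₂⁰(γ(Kv)(t), γ v(t); γ w) ≥ ⟨f(t), w⟩. -/
/-!
For fixed data `ℓ ∈ V*` and `w ∈ X`, the stationary inequality
`⟨A v, z⟩ + J₂⁰(w, γ v; γ z) ≥ ⟨ℓ, z⟩` is the optimality condition of the energy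
`½ ⟨A v, v⟩ - ⟨ℓ, v⟩ + J(w, γ v)`, since `A` is symmetric. By H(A) and H(J)(c) the Clarke
derivative of this energy is strongly monotone with constant `m_A - m_{J1} c_γ² > 0`.
Restricted to a segment and tilted by a quadratic, the energy has a monotone one-dimensional
Clarke derivative, so a Clarke mean value inequality makes it strongly midpoint convex and
bounded below; minimizing sequences are then Cauchy and their limit solves the inequality.
Adding the inequalities for two data sets shows that the solution `S(ℓ, w)` is unique and
Lipschitz in `(ℓ, w)`. Hence `P_hvi` is the integral equation
`v(t) = S(f(t) - B((Kv)(t)), γ((Kv)(t)))`, whose right-hand side is Lipschitz in `Kv`, and a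
power of the corresponding Volterra operator is a contraction on `C([0,T]; V)`.
-/

open Filter MeasureTheory Set

noncomputable def clarkeDeriv {Y : Type*} [NormedAddCommGroup Y] [NormedSpace ℝ Y]
    (φ : Y → ℝ) (y z : Y) : ℝ :=
  Filter.limsup (fun p : Y × ℝ => (φ (p.1 + p.2 • z) - φ p.1) / p.2)
    ((nhds y) ×ˢ (nhdsWithin 0 (Set.Ioi 0)))

def clarkeSubdiff {Y : Type*} [NormedAddCommGroup Y] [NormedSpace ℝ Y]
    (φ : Y → ℝ) (y : Y) : Set (Y →L[ℝ] ℝ) :=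
  {ξ | ∀ z, ξ z ≤ clarkeDeriv φ y z}

open scoped Topology NNReal

section ClarkeDeriv

def clarkeFilter {Y : Type*} [TopologicalSpace Y] (y : Y) : Filter (Y × ℝ) := 𝓝 y ×ˢ 𝓝[>] 0

section
variable {Y : Type*} [TopologicalSpace Y]

instance (y : Y) : (clarkeFilter y).NeBot := by
  unfold clarkeFilter; infer_instance

theorem clarkeFilter_le_nhds (y : Y) : clarkeFilter y ≤ 𝓝 (y, 0) := by
  rw [nhds_prod_eq]
  exact Filter.prod_mono le_rfl nhdsWithin_le_nhds

theorem eventually_pos_clarkeFilter (y : Y) : ∀ᶠ p in clarkeFilter y, 0 < p.2 :=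
  tendsto_snd.eventually self_mem_nhdsWithin

theorem tendsto_prodMk_clarkeFilter (y : Y) :
    Tendsto (fun t : ℝ => (y, t)) (𝓝[>] 0) (clarkeFilter y) :=
  tendsto_const_nhds.prodMk tendsto_id

end

variable {Y Y' : Type*} [NormedAddCommGroup Y] [NormedSpace ℝ Y]
  [NormedAddCommGroup Y'] [NormedSpace ℝ Y'] {φ : Y → ℝ} {y z : Y} {c : ℝ}

noncomputable def clarkeQuotient (φ : Y → ℝ) (z : Y) (p : Y × ℝ) : ℝ :=
  (φ (p.1 + p.2 • z) - φ p.1) / p.2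

theorem clarkeDeriv_eq_limsup :
    clarkeDeriv φ y z = limsup (clarkeQuotient φ z) (clarkeFilter y) := rfl

theorem tendsto_add_smul_clarkeFilter (y z : Y) :
    Tendsto (fun p : Y × ℝ => p.1 + p.2 • z) (clarkeFilter y) (𝓝 y) := by
  have : Continuous fun p : Y × ℝ => p.1 + p.2 • z := by fun_prop
  simpa using (this.tendsto (y, 0)).mono_left (clarkeFilter_le_nhds y)

theorem LipschitzOnWith.eventually_abs_clarkeQuotient_le {s : Set Y} {K : ℝ≥0}
    (hK : LipschitzOnWith K φ s) (hs : s ∈ 𝓝 y) (z : Y) :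
    ∀ᶠ p in clarkeFilter y, |clarkeQuotient φ z p| ≤ K * ‖z‖ := by
  have hfst : Tendsto Prod.fst (clarkeFilter y) (𝓝 y) := tendsto_fst
  filter_upwards [tendsto_add_smul_clarkeFilter y z hs, hfst hs, eventually_pos_clarkeFilter y]
    with p hp₁ hp₂ hpos
  have := hK.dist_le_mul _ hp₁ _ hp₂
  rw [Real.dist_eq, dist_eq_norm, add_sub_cancel_left, norm_smul, Real.norm_of_nonneg hpos.le]
    at this
  rw [clarkeQuotient, abs_div, abs_of_pos hpos, div_le_iff₀ hpos]
  linarith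

namespace LocallyLipschitz

theorem exists_eventually_abs_clarkeQuotient_le (hφ : LocallyLipschitz φ) (y : Y) :
    ∃ K : ℝ, ∀ z, ∀ᶠ p in clarkeFilter y, |clarkeQuotient φ z p| ≤ K * ‖z‖ := by
  obtain ⟨K, s, hs, hK⟩ := hφ y
  exact ⟨K, hK.eventually_abs_clarkeQuotient_le hs⟩

theorem isBoundedUnder_clarkeQuotient (hφ : LocallyLipschitz φ) (y z : Y) :
    IsBoundedUnder (· ≤ ·) (clarkeFilter y) (clarkeQuotient φ z) ∧
      IsBoundedUnder (· ≥ ·) (clarkeFilter y) (clarkeQuotient φ z) := by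
  obtain ⟨K, hK⟩ := hφ.exists_eventually_abs_clarkeQuotient_le y
  exact isBoundedUnder_le_abs.mp ⟨K * ‖z‖, hK z⟩

theorem clarkeDeriv_le_of_eventually_le (hφ : LocallyLipschitz φ)
    (h : ∀ᶠ p in clarkeFilter y, clarkeQuotient φ z p ≤ c) : clarkeDeriv φ y z ≤ c := by
  rw [clarkeDeriv_eq_limsup]
  exact limsup_le_of_le (hφ.isBoundedUnder_clarkeQuotient y z).2.isCoboundedUnder_le h

theorem eventually_clarkeQuotient_lt (hφ : LocallyLipschitz φ) (h : clarkeDeriv φ y z < c) :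
    ∀ᶠ p in clarkeFilter y, clarkeQuotient φ z p < c := by
  rw [clarkeDeriv_eq_limsup] at h
  exact eventually_lt_of_limsup_lt h (hφ.isBoundedUnder_clarkeQuotient y z).1

theorem le_clarkeDeriv_of_frequently_le (hφ : LocallyLipschitz φ)
    (h : ∃ᶠ p in clarkeFilter y, c ≤ clarkeQuotient φ z p) : c ≤ clarkeDeriv φ y z := by
  rw [clarkeDeriv_eq_limsup]
  exact le_limsup_of_frequently_le h (hφ.isBoundedUnder_clarkeQuotient y z).1

theorem exists_abs_clarkeDeriv_le (hφ : LocallyLipschitz φ) (y : Y) :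
    ∃ K : ℝ, ∀ z, |clarkeDeriv φ y z| ≤ K * ‖z‖ := by
  obtain ⟨K, hK⟩ := hφ.exists_eventually_abs_clarkeQuotient_le y
  refine ⟨K, fun z => abs_le.mpr ⟨?_, ?_⟩⟩
  · exact hφ.le_clarkeDeriv_of_frequently_le
      ((hK z).mono fun p hp => (abs_le.mp hp).1).frequently
  · exact hφ.clarkeDeriv_le_of_eventually_le ((hK z).mono fun p hp => (abs_le.mp hp).2)

theorem le_clarkeDeriv_of_eventually_le (hφ : LocallyLipschitz φ)
    (h : ∀ᶠ t in 𝓝[>] 0, c ≤ (φ (y + t • z) - φ y) / t) : c ≤ clarkeDeriv φ y z :=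
  hφ.le_clarkeDeriv_of_frequently_le ((tendsto_prodMk_clarkeFilter y).frequently h.frequently)

theorem eventually_lt_of_clarkeDeriv_lt (hφ : LocallyLipschitz φ) (h : clarkeDeriv φ y z < c) :
    ∀ᶠ t in 𝓝[>] 0, (φ (y + t • z) - φ y) / t < c :=
  (tendsto_prodMk_clarkeFilter y).eventually (hφ.eventually_clarkeQuotient_lt h)

theorem clarkeDeriv_smul_le (hφ : LocallyLipschitz φ) (hc : 0 < c) (y z : Y) :
    clarkeDeriv φ y (c • z) ≤ c * clarkeDeriv φ y z := by
  refine le_of_forall_gt_imp_ge_of_dense fun r hr => hφ.clarkeDeriv_le_of_eventually_le ?_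
  have hmul : Tendsto (fun t : ℝ => c * t) (𝓝[>] 0) (𝓝[>] 0) :=
    tendsto_nhdsWithin_of_tendsto_nhds_of_eventually_within _
      (((continuous_const_mul c).tendsto' 0 0 (mul_zero c)).mono_left nhdsWithin_le_nhds)
      (eventually_nhdsWithin_of_forall fun _ ht => mul_pos hc ht)
  have hm : Tendsto (fun p : Y × ℝ => (p.1, c * p.2)) (clarkeFilter y) (clarkeFilter y) :=
    tendsto_fst.prodMk (hmul.comp tendsto_snd)
  have hlt : clarkeDeriv φ y z < r / c := by rwa [lt_div_iff₀' hc]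
  filter_upwards [hm.eventually (hφ.eventually_clarkeQuotient_lt hlt),
    eventually_pos_clarkeFilter y] with p hp hpos
  have key : clarkeQuotient φ (c • z) p = c * clarkeQuotient φ z (p.1, c * p.2) := by
    simp only [clarkeQuotient, smul_smul, mul_comm p.2 c]
    field_simp
  rw [key]
  exact ((lt_div_iff₀' hc).mp hp).le

theorem clarkeDeriv_smul (hφ : LocallyLipschitz φ) (hc : 0 < c) (y z : Y) :
    clarkeDeriv φ y (c • z) = c * clarkeDeriv φ y z := by
  refine le_antisymm (hφ.clarkeDeriv_smul_le hc y z) ?_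
  have h := hφ.clarkeDeriv_smul_le (inv_pos.mpr hc) y (c • z)
  rwa [inv_smul_smul₀ hc.ne', le_inv_mul_iff₀ hc] at h

theorem comp_add_clm (hφ : LocallyLipschitz φ) (L : Y' →L[ℝ] Y) (x : Y) :
    LocallyLipschitz fun u => φ (x + L u) :=
  hφ.comp ((LocallyLipschitz.const x).add L.lipschitz.locallyLipschitz)

theorem clarkeDeriv_comp_add_clm_le (hφ : LocallyLipschitz φ) (L : Y' →L[ℝ] Y) (x : Y)
    (y z : Y') : clarkeDeriv (fun u => φ (x + L u)) y z ≤ clarkeDeriv φ (x + L y) (L z) := by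
  refine le_of_forall_gt_imp_ge_of_dense fun r hr =>
    (hφ.comp_add_clm L x).clarkeDeriv_le_of_eventually_le ?_
  have hm : Tendsto (fun p : Y' × ℝ => (x + L p.1, p.2)) (clarkeFilter y)
      (clarkeFilter (x + L y)) :=
    (((continuous_const.add L.continuous).tendsto y).comp tendsto_fst).prodMk tendsto_snd
  filter_upwards [hm.eventually (hφ.eventually_clarkeQuotient_lt hr)] with p hp
  simpa only [clarkeQuotient, map_add, map_smul, add_assoc] using hp.le

theorem comp_add_smul (hφ : LocallyLipschitz φ) (x d : Y) :
    LocallyLipschitz fun t : ℝ => φ (x + t • d) := by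
  simpa using hφ.comp_add_clm ((1 : ℝ →L[ℝ] ℝ).smulRight d) x

theorem clarkeDeriv_comp_add_smul_le (hφ : LocallyLipschitz φ) (x d : Y) (u c : ℝ) :
    clarkeDeriv (fun t : ℝ => φ (x + t • d)) u c ≤ clarkeDeriv φ (x + u • d) (c • d) := by
  simpa using hφ.clarkeDeriv_comp_add_clm_le ((1 : ℝ →L[ℝ] ℝ).smulRight d) x u c

theorem of_hasStrictFDerivAt {a' : Y → Y →L[ℝ] ℝ} (ha : ∀ u, HasStrictFDerivAt φ (a' u) u) :
    LocallyLipschitz φ :=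
  fun u => (ha u).exists_lipschitzOnWith

theorem clarkeDeriv_nonneg_of_forall_le (hφ : LocallyLipschitz φ) (hmin : ∀ u, φ y ≤ φ u)
    (z : Y) : 0 ≤ clarkeDeriv φ y z :=
  hφ.le_clarkeDeriv_of_eventually_le <| eventually_nhdsWithin_of_forall fun _ ht =>
    div_nonneg (sub_nonneg.mpr (hmin _)) (le_of_lt ht)

end LocallyLipschitz

theorem HasStrictFDerivAt.tendsto_clarkeQuotient {a' : Y →L[ℝ] ℝ}
    (ha : HasStrictFDerivAt φ a' y) (z : Y) :
    Tendsto (clarkeQuotient φ z) (clarkeFilter y) (𝓝 (a' z)) := by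
  have hm : Tendsto (fun p : Y × ℝ => (p.1 + p.2 • z, p.1)) (clarkeFilter y) (𝓝 (y, y)) :=
    (tendsto_add_smul_clarkeFilter y z).prodMk_nhds tendsto_fst
  have ho := (hasStrictFDerivAt_iff_isLittleO.mp ha).comp_tendsto hm
  have hO : (fun p : Y × ℝ => p.1 + p.2 • z - p.1) =O[clarkeFilter y] (fun p => p.2) :=
    Asymptotics.IsBigO.of_bound ‖z‖ (Eventually.of_forall fun p => by
      simp [norm_smul, mul_comm])
  have h0 := ((ho.trans_isBigO hO).tendsto_div_nhds_zero).add_const (a' z)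
  rw [zero_add] at h0
  refine h0.congr' ?_
  filter_upwards [eventually_pos_clarkeFilter y] with p hp
  simp only [Function.comp_apply, add_sub_cancel_left, map_smul, smul_eq_mul, clarkeQuotient]
  field_simp
  ring

theorem clarkeDeriv_add_le {a b : Y → ℝ} {a' : Y → Y →L[ℝ] ℝ}
    (ha : ∀ u, HasStrictFDerivAt a (a' u) u) (hb : LocallyLipschitz b) (y z : Y) :
    clarkeDeriv (fun u => a u + b u) y z ≤ a' y z + clarkeDeriv b y z := by
  refine le_of_forall_gt_imp_ge_of_dense fun r hr =>
    ((LocallyLipschitz.of_hasStrictFDerivAt ha).add hb).clarkeDeriv_le_of_eventually_le ?_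
  obtain ⟨s, hbs, hsr⟩ := exists_between (lt_sub_iff_add_lt'.mpr hr)
  filter_upwards [((ha y).tendsto_clarkeQuotient z).eventually_lt_const (lt_sub_comm.mp hsr),
    hb.eventually_clarkeQuotient_lt hbs] with p h₁ h₂
  have : clarkeQuotient (fun u => a u + b u) z p =
      clarkeQuotient a z p + clarkeQuotient b z p := by
    simp only [clarkeQuotient]; ring
  linarith

end ClarkeDeriv

section MeanValue

variable {Y : Type*} [NormedAddCommGroup Y] [NormedSpace ℝ Y] {φ : Y → ℝ} {M : ℝ}

namespace LocallyLipschitz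

theorem sub_le_of_clarkeDeriv_le {h : ℝ → ℝ} (hh : LocallyLipschitz h)
    (hM : ∀ t ∈ Ico (0 : ℝ) 1, clarkeDeriv h t 1 ≤ M) : h 1 - h 0 ≤ M := by
  have hB : ∀ x, HasDerivWithinAt (fun t => h 0 + M * t) M (Ici x) x := fun x => by
    simpa using ((hasDerivAt_id x).const_mul M).const_add (h 0) |>.hasDerivWithinAt
  have := image_le_of_liminf_slope_right_le_deriv_boundary hh.continuous.continuousOn
    (B := fun t => h 0 + M * t) (by simp) (by fun_prop) (fun x _ => hB x) ?_
    (right_mem_Icc.mpr zero_le_one)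
  · linarith
  intro x hx r hr
  have hev := hh.eventually_lt_of_clarkeDeriv_lt ((hM x hx).trans_lt hr)
  have hmap : map (x + ·) (𝓝[>] (0 : ℝ)) = 𝓝[>] x := by
    simp
  rw [← hmap]
  refine Eventually.frequently (eventually_map.mpr (hev.mono fun t ht => ?_))
  simpa [slope_def_field] using ht

theorem sub_le_of_clarkeDeriv_segment_le (hφ : LocallyLipschitz φ) (x d : Y)
    (hM : ∀ t ∈ Ico (0 : ℝ) 1, clarkeDeriv φ (x + t • d) d ≤ M) : φ (x + d) - φ x ≤ M := by
  have := (hφ.comp_add_smul x d).sub_le_of_clarkeDeriv_le fun t ht =>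
    (hφ.clarkeDeriv_comp_add_smul_le x d t 1).trans (by simpa using hM t ht)
  simpa using this

end LocallyLipschitz

end MeanValue

section RelaxedMonotone

variable {Y : Type*} [NormedAddCommGroup Y] [NormedSpace ℝ Y] {φ : Y → ℝ} {κ : ℝ}

/-- Condition H(J)(c) at `w₁ = w₂`; with `m = -κ < 0` it is strong monotonicity of `∂φ`. -/
def ClarkeRelaxedMonotone (φ : Y → ℝ) (m : ℝ) : Prop :=
  ∀ p q : Y, clarkeDeriv φ p (q - p) + clarkeDeriv φ q (p - q) ≤ m * ‖p - q‖ ^ 2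

theorem LocallyLipschitz.two_mul_le_add_of_clarkeDeriv {h : ℝ → ℝ} (hh : LocallyLipschitz h)
    (hmono : ∀ u v, 0 ≤ u → u < v → v ≤ 1 → clarkeDeriv h u 1 + clarkeDeriv h v (-1) ≤ 0) :
    2 * h (1 / 2) ≤ h 0 + h 1 := by
  have hhalf : ∀ t w, clarkeDeriv h t (w / 2) = clarkeDeriv h t w / 2 := fun t w => by
    simpa [smul_eq_mul, div_eq_inv_mul, mul_comm] using
      hh.clarkeDeriv_smul (c := 1 / 2) (by norm_num) t w
  have hupper : ∀ v ∈ Ioc (1 / 2 : ℝ) 1, clarkeDeriv h v (-1) ≤ 2 * (h 0 - h (1 / 2)) := by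
    intro v hv
    have := hh.sub_le_of_clarkeDeriv_segment_le 0 (1 / 2) (M := -clarkeDeriv h v (-1) / 2)
      fun t ht => by
        have := hmono (0 + t • (1 / 2)) v (by simp; linarith [ht.1])
          (by simp; linarith [ht.2, hv.1]) hv.2
        rw [hhalf]
        linarith
    norm_num at this
    linarith
  have := hh.sub_le_of_clarkeDeriv_segment_le 1 (-1 / 2) (M := h 0 - h (1 / 2)) fun t ht => by
    have := hupper (1 + t • (-1 / 2)) ⟨by simp; linarith [ht.2], by simp; linarith [ht.1]⟩
    rw [hhalf]
    linarith
  norm_num at this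
  linarith

theorem hasStrictFDerivAt_neg_half_mul_sq (β u : ℝ) :
    HasStrictFDerivAt (fun t : ℝ => -(β / 2) * t ^ 2)
      (ContinuousLinearMap.toSpanSingleton ℝ (-(β * u))) u :=
  (((hasStrictDerivAt_pow 2 u).const_mul (-(β / 2))).congr_deriv (by ring)).hasStrictFDerivAt

theorem ClarkeRelaxedMonotone.clarkeDeriv_add_clarkeDeriv_neg_le
    (hmono : ClarkeRelaxedMonotone φ (-κ)) (hφ : LocallyLipschitz φ) (x d : Y) {u v : ℝ}
    (huv : u < v) :
    clarkeDeriv φ (x + u • d) d + clarkeDeriv φ (x + v • d) (-d) ≤ -(κ * (v - u) * ‖d‖ ^ 2) := by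
  have he : 0 < v - u := sub_pos.mpr huv
  have hpq : (x + v • d) - (x + u • d) = (v - u) • d := by module
  have hqp : (x + u • d) - (x + v • d) = (v - u) • -d := by module
  have hm := hmono (x + u • d) (x + v • d)
  rw [hpq, hqp, hφ.clarkeDeriv_smul he, hφ.clarkeDeriv_smul he, norm_smul, norm_neg,
    Real.norm_of_nonneg he.le] at hm
  exact le_of_mul_le_mul_left (by linear_combination hm) he

theorem ClarkeRelaxedMonotone.midpoint_le (hmono : ClarkeRelaxedMonotone φ (-κ))
    (hφ : LocallyLipschitz φ) (x y : Y) :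
    φ (midpoint ℝ x y) ≤ (φ x + φ y) / 2 - κ / 8 * ‖x - y‖ ^ 2 := by
  set d := y - x
  set β := κ * ‖d‖ ^ 2
  -- Subtracting `β t² / 2` along the segment turns strong monotonicity into monotonicity.
  set h := fun t : ℝ => -(β / 2) * t ^ 2 + φ (x + t • d)
  have hh : LocallyLipschitz h :=
    (LocallyLipschitz.of_hasStrictFDerivAt (hasStrictFDerivAt_neg_half_mul_sq β)).add
      (hφ.comp_add_smul x d)
  have hder : ∀ u c : ℝ, clarkeDeriv h u c ≤ -(β * u) * c + clarkeDeriv φ (x + u • d) (c • d) :=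
    fun u c => by
      simpa [h, mul_comm] using (clarkeDeriv_add_le (hasStrictFDerivAt_neg_half_mul_sq β)
        (hφ.comp_add_smul x d) u c).trans
        (add_le_add le_rfl (hφ.clarkeDeriv_comp_add_smul_le x d u c))
  have hmono' : ∀ u v, 0 ≤ u → u < v → v ≤ 1 →
      clarkeDeriv h u 1 + clarkeDeriv h v (-1) ≤ 0 := by
    intro u v _ huv _
    have h₁ := hder u 1
    have h₂ := hder v (-1)
    simp only [one_smul, neg_smul, mul_one, mul_neg, neg_neg] at h₁ h₂
    have hβ : β * (v - u) = κ * (v - u) * ‖d‖ ^ 2 := by ring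
    linarith [hmono.clarkeDeriv_add_clarkeDeriv_neg_le hφ x d huv]
  have hmid : x + (1 / 2 : ℝ) • d = midpoint ℝ x y := by
    rw [midpoint_eq_smul_add, invOf_eq_inv]
    module
  have := hh.two_mul_le_add_of_clarkeDeriv hmono'
  simp only [h, hmid, zero_smul, add_zero, one_smul, d, add_sub_cancel] at this
  rw [norm_sub_rev]
  linarith

theorem ClarkeRelaxedMonotone.exists_sub_le (hmono : ClarkeRelaxedMonotone φ (-κ))
    (hκ : 0 ≤ κ) (hφ : LocallyLipschitz φ) (x : Y) :
    ∃ K : ℝ, ∀ y, φ x - φ y ≤ K * ‖x - y‖ := by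
  obtain ⟨K, hK⟩ := hφ.exists_abs_clarkeDeriv_le x
  refine ⟨K, fun y => ?_⟩
  -- Monotonicity against `x` bounds `φ⁰(p; x - y)` on the segment by `-φ⁰(x; p - x)`.
  have := hφ.sub_le_of_clarkeDeriv_segment_le y (x - y) (M := K * ‖x - y‖) fun t ht => by
    have ht' : 0 < 1 - t := sub_pos.mpr ht.2
    have hxp : x - (y + t • (x - y)) = (1 - t) • (x - y) := by module
    have hpx : y + t • (x - y) - x = (1 - t) • -(x - y) := by module
    have hm := hmono (y + t • (x - y)) x
    have hx := (abs_le.mp (hK (y + t • (x - y) - x))).1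
    rw [hxp, hpx, hφ.clarkeDeriv_smul ht'] at hm
    rw [hpx, norm_smul, norm_neg, Real.norm_of_nonneg ht'.le] at hx
    refine le_of_mul_le_mul_left ?_ ht'
    nlinarith [sq_nonneg ‖(1 - t) • (x - y)‖]
  simpa using this

theorem ClarkeRelaxedMonotone.bddBelow_range (hmono : ClarkeRelaxedMonotone φ (-κ))
    (hκ : 0 < κ) (hφ : LocallyLipschitz φ) : BddBelow (range φ) := by
  obtain ⟨K, hK⟩ := hmono.exists_sub_le hκ.le hφ 0
  refine ⟨φ 0 - K ^ 2 / κ, ?_⟩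
  rintro _ ⟨y, rfl⟩
  -- The midpoint inequality upgrades the linear lower bound at `0` to quadratic growth.
  have hmid := hmono.midpoint_le hφ 0 y
  have hlin := hK (midpoint ℝ 0 y)
  rw [zero_sub, norm_neg, ← dist_zero_left, dist_left_midpoint, dist_zero_left] at hlin
  rw [zero_sub, norm_neg] at hmid
  have hsq : 0 ≤ (κ * ‖y‖ - 2 * K) ^ 2 / κ := by positivity
  have hexp : (κ * ‖y‖ - 2 * K) ^ 2 / κ = κ * ‖y‖ ^ 2 - 4 * K * ‖y‖ + 4 * (K ^ 2 / κ) := by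
    field_simp
    ring
  norm_num at hlin
  linarith

end RelaxedMonotone

theorem exists_forall_le_of_midpoint_le {E : Type*} [NormedAddCommGroup E] [NormedSpace ℝ E]
    [CompleteSpace E] {f : E → ℝ} {κ : ℝ} (hκ : 0 < κ) (hf : Continuous f)
    (hbdd : BddBelow (range f))
    (hmid : ∀ x y, f (midpoint ℝ x y) ≤ (f x + f y) / 2 - κ * ‖x - y‖ ^ 2) :
    ∃ x, ∀ y, f x ≤ f y := by
  set i := ⨅ x, f x
  have hε : ∀ n : ℕ, 0 < κ / ((n : ℝ) + 1) ^ 2 := fun n => by positivity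
  choose xs hxs using fun n : ℕ => exists_lt_of_ciInf_lt (lt_add_of_pos_right i (hε n))
  have hcauchy : CauchySeq xs := by
    refine cauchySeq_of_le_tendsto_0 (fun N : ℕ => 1 / ((N : ℝ) + 1)) (fun n m N hn hm => ?_)
      tendsto_one_div_add_atTop_nhds_zero_nat
    have hN : ∀ k, N ≤ k → κ / ((k : ℝ) + 1) ^ 2 ≤ κ / ((N : ℝ) + 1) ^ 2 := fun k hk => by
      gcongr
    have hnm := hmid (xs n) (xs m)
    have hi := ciInf_le hbdd (midpoint ℝ (xs n) (xs m))
    have hsq : κ * ‖xs n - xs m‖ ^ 2 ≤ κ * (1 / ((N : ℝ) + 1)) ^ 2 := by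
      rw [div_pow, one_pow, mul_one_div]
      linarith [hxs n, hxs m, hN n hn, hN m hm]
    rw [dist_eq_norm]
    exact (pow_le_pow_iff_left₀ (norm_nonneg _) (by positivity) two_ne_zero).mp
      (le_of_mul_le_mul_left hsq hκ)
  obtain ⟨x, hx⟩ := cauchySeq_tendsto_of_complete hcauchy
  have hfx : f x ≤ i := by
    refine le_of_tendsto_of_tendsto' ((hf.tendsto x).comp hx) ?_ fun n => (hxs n).le
    have h0 : Tendsto (fun n : ℕ => κ / ((n : ℝ) + 1) ^ 2) atTop (𝓝 0) := by
      have := (tendsto_one_div_add_atTop_nhds_zero_nat.pow 2).const_mul κ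
      rw [zero_pow two_ne_zero, mul_zero] at this
      exact this.congr fun n => by rw [div_pow, one_pow, mul_one_div]
    simpa using tendsto_const_nhds.add h0
  exact ⟨x, fun y => hfx.trans (ciInf_le hbdd y)⟩

theorem ClarkeRelaxedMonotone.exists_forall_le {Y : Type*} [NormedAddCommGroup Y]
    [NormedSpace ℝ Y] [CompleteSpace Y] {φ : Y → ℝ} {κ : ℝ}
    (hmono : ClarkeRelaxedMonotone φ (-κ)) (hκ : 0 < κ) (hφ : LocallyLipschitz φ) :
    ∃ x, ∀ y, φ x ≤ φ y :=
  exists_forall_le_of_midpoint_le (κ := κ / 8) (by positivity) hφ.continuous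
    (hmono.bddBelow_range hκ hφ) (hmono.midpoint_le hφ)

section Hemivariational

variable {V X : Type*} [NormedAddCommGroup V] [NormedSpace ℝ V]
  [NormedAddCommGroup X] [NormedSpace ℝ X]
  (γ : V →L[ℝ] X) (A : V →L[ℝ] V →L[ℝ] ℝ) (j : X → ℝ) (ℓ : V →L[ℝ] ℝ)

def IsHVISolution (v : V) : Prop :=
  ∀ z, ℓ z ≤ A v z + clarkeDeriv j (γ v) (γ z)

noncomputable def hviEnergy (v : V) : ℝ :=
  (1 / 2) * A v v - ℓ v + j (γ v)

variable {γ A j ℓ}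

theorem isHVISolution_sub_iff {b : V →L[ℝ] ℝ} {v : V} :
    IsHVISolution γ A j (ℓ - b) v ↔ ∀ z, ℓ z ≤ A v z + b z + clarkeDeriv j (γ v) (γ z) :=
  forall_congr' fun z => by
    rw [sub_apply]
    constructor <;> intro h <;> linarith

theorem hasStrictFDerivAt_quadratic (hA : ∀ u v, A u v = A v u) (v : V) :
    HasStrictFDerivAt (fun u => (1 / 2) * A u u - ℓ u) (A v - ℓ) v := by
  have hq := A.hasStrictFDerivAt_of_bilinear (hasStrictFDerivAt_id v) (hasStrictFDerivAt_id v)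
  refine ((hq.const_mul (1 / 2)).sub ℓ.hasStrictFDerivAt).congr_fderiv ?_
  ext z
  simp [hA z v]
  ring

theorem locallyLipschitz_hviEnergy (hA : ∀ u v, A u v = A v u) (hj : LocallyLipschitz j) :
    LocallyLipschitz (hviEnergy γ A j ℓ) :=
  (LocallyLipschitz.of_hasStrictFDerivAt (hasStrictFDerivAt_quadratic hA)).add
    (hj.comp γ.lipschitz.locallyLipschitz)

theorem clarkeDeriv_hviEnergy_le (hA : ∀ u v, A u v = A v u) (hj : LocallyLipschitz j)
    (v z : V) :
    clarkeDeriv (hviEnergy γ A j ℓ) v z ≤ A v z - ℓ z + clarkeDeriv j (γ v) (γ z) := by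
  have hcomp := hj.clarkeDeriv_comp_add_clm_le γ 0 v z
  simp only [zero_add] at hcomp
  have := clarkeDeriv_add_le (hasStrictFDerivAt_quadratic (ℓ := ℓ) hA) (hj.comp_add_clm γ 0) v z
  simp only [zero_add, sub_apply] at this
  exact this.trans (add_le_add le_rfl hcomp)

theorem clarkeRelaxedMonotone_hviEnergy {mA m : ℝ} (hA : ∀ u v, A u v = A v u)
    (hAco : ∀ u, mA * ‖u‖ ^ 2 ≤ A u u) (hj : LocallyLipschitz j)
    (hjm : ClarkeRelaxedMonotone j m) (hm : 0 ≤ m) :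
    ClarkeRelaxedMonotone (hviEnergy γ A j ℓ) (-(mA - m * ‖γ‖ ^ 2)) := by
  intro p q
  have h₁ := clarkeDeriv_hviEnergy_le (γ := γ) (ℓ := ℓ) hA hj p (q - p)
  have h₂ := clarkeDeriv_hviEnergy_le (γ := γ) (ℓ := ℓ) hA hj q (p - q)
  simp only [map_sub γ] at h₁ h₂
  have hγ : ‖γ p - γ q‖ ^ 2 ≤ ‖γ‖ ^ 2 * ‖p - q‖ ^ 2 := by
    rw [← map_sub, ← mul_pow]
    exact pow_le_pow_left₀ (norm_nonneg _) (γ.le_opNorm _) 2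
  have hA' : A p (q - p) + A q (p - q) = -A (p - q) (p - q) := by
    simp only [map_sub, sub_apply]
    ring
  have hℓ : ℓ (q - p) + ℓ (p - q) = 0 := by
    simp only [map_sub]
    ring
  linarith [hjm (γ p) (γ q), hAco (p - q), mul_le_mul_of_nonneg_left hγ hm]

theorem IsHVISolution.of_forall_le (hA : ∀ u v, A u v = A v u) (hj : LocallyLipschitz j) {v : V}
    (hmin : ∀ u, hviEnergy γ A j ℓ v ≤ hviEnergy γ A j ℓ u) : IsHVISolution γ A j ℓ v :=
  fun z => by
    have := ((locallyLipschitz_hviEnergy hA hj).clarkeDeriv_nonneg_of_forall_le hmin z).trans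
      (clarkeDeriv_hviEnergy_le hA hj v z)
    linarith

theorem exists_isHVISolution [CompleteSpace V] {mA m : ℝ} (hA : ∀ u v, A u v = A v u)
    (hAco : ∀ u, mA * ‖u‖ ^ 2 ≤ A u u) (hj : LocallyLipschitz j)
    (hjm : ClarkeRelaxedMonotone j m) (hm : 0 ≤ m) (hκ : 0 < mA - m * ‖γ‖ ^ 2) :
    ∃ v, IsHVISolution γ A j ℓ v :=
  let ⟨v, hv⟩ := (clarkeRelaxedMonotone_hviEnergy hA hAco hj hjm hm).exists_forall_le hκ
    (locallyLipschitz_hviEnergy hA hj)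
  ⟨v, .of_forall_le hA hj hv⟩

theorem IsHVISolution.norm_sub_le {J : X → X → ℝ} {mA mJ1 mJ2 : ℝ}
    (hAco : ∀ u, mA * ‖u‖ ^ 2 ≤ A u u) (hmJ1 : 0 ≤ mJ1) (hmJ2 : 0 ≤ mJ2)
    (hJc : ∀ w₁ w₂ v₁ v₂ : X,
      clarkeDeriv (J w₁) v₁ (v₂ - v₁) + clarkeDeriv (J w₂) v₂ (v₁ - v₂) ≤
        mJ1 * ‖v₁ - v₂‖ ^ 2 + mJ2 * ‖w₁ - w₂‖ * ‖v₁ - v₂‖)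
    {ℓ₁ ℓ₂ : V →L[ℝ] ℝ} {w₁ w₂ : X} {v₁ v₂ : V}
    (h₁ : IsHVISolution γ A (J w₁) ℓ₁ v₁) (h₂ : IsHVISolution γ A (J w₂) ℓ₂ v₂) :
    (mA - mJ1 * ‖γ‖ ^ 2) * ‖v₁ - v₂‖ ≤ ‖ℓ₁ - ℓ₂‖ + mJ2 * ‖γ‖ * ‖w₁ - w₂‖ := by
  set e := ‖v₁ - v₂‖
  have ha := h₁ (v₂ - v₁)
  have hb := h₂ (v₁ - v₂)
  simp only [map_sub γ] at ha hb
  have hγ : ‖γ v₁ - γ v₂‖ ≤ ‖γ‖ * e := by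
    rw [← map_sub]
    exact γ.le_opNorm _
  have hJ : mJ1 * ‖γ v₁ - γ v₂‖ ^ 2 + mJ2 * ‖w₁ - w₂‖ * ‖γ v₁ - γ v₂‖ ≤
      mJ1 * (‖γ‖ * e) ^ 2 + mJ2 * ‖w₁ - w₂‖ * (‖γ‖ * e) := by
    gcongr
  have hA' : A v₁ (v₂ - v₁) + A v₂ (v₁ - v₂) = -A (v₁ - v₂) (v₁ - v₂) := by
    simp only [map_sub, sub_apply]
    ring
  have hℓ : ℓ₁ (v₂ - v₁) + ℓ₂ (v₁ - v₂) = -(ℓ₁ - ℓ₂) (v₁ - v₂) := by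
    simp only [map_sub, sub_apply]
    ring
  have hℓe : (ℓ₁ - ℓ₂) (v₁ - v₂) ≤ ‖ℓ₁ - ℓ₂‖ * e :=
    (le_abs_self _).trans ((ℓ₁ - ℓ₂).le_opNorm _)
  have key : (mA - mJ1 * ‖γ‖ ^ 2) * e * e ≤ (‖ℓ₁ - ℓ₂‖ + mJ2 * ‖γ‖ * ‖w₁ - w₂‖) * e := by
    linarith [hJc w₁ w₂ (γ v₁) (γ v₂), hAco (v₁ - v₂)]
  rcases (norm_nonneg _ : 0 ≤ e).eq_or_lt with he | he
  · rw [show e = 0 from he.symm, mul_zero]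
    positivity
  · exact le_of_mul_le_mul_right key he

theorem IsHVISolution.unique {mA m : ℝ} (hAco : ∀ u, mA * ‖u‖ ^ 2 ≤ A u u)
    (hjm : ClarkeRelaxedMonotone j m) (hm : 0 ≤ m) (hκ : 0 < mA - m * ‖γ‖ ^ 2) {v₁ v₂ : V}
    (h₁ : IsHVISolution γ A j ℓ v₁) (h₂ : IsHVISolution γ A j ℓ v₂) : v₁ = v₂ := by
  have := IsHVISolution.norm_sub_le (J := fun _ => j) (w₁ := 0) (w₂ := 0) hAco hm le_rfl
    (fun _ _ v₁ v₂ => by simpa using hjm v₁ v₂) h₁ h₂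
  simp only [sub_self, norm_zero, mul_zero, add_zero] at this
  rw [← sub_eq_zero, ← norm_le_zero_iff]
  exact le_of_mul_le_mul_left (by simpa using this) hκ

end Hemivariational

section SolutionMap

variable {V X : Type*} [NormedAddCommGroup V] [NormedSpace ℝ V] [NormedAddCommGroup X]
  {S : (V →L[ℝ] ℝ) → X → V} {κ c : ℝ}

theorem continuous_left_of_norm_sub_le (hκ : 0 < κ)
    (hS : ∀ ℓ₁ ℓ₂ w₁ w₂, κ * ‖S ℓ₁ w₁ - S ℓ₂ w₂‖ ≤ ‖ℓ₁ - ℓ₂‖ + c * ‖w₁ - w₂‖) (w : X) :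
    Continuous (S · w) :=
  (LipschitzWith.of_dist_le' (K := κ⁻¹) fun ℓ₁ ℓ₂ => by
    simpa [inv_mul_eq_div, le_div_iff₀' hκ, dist_eq_norm] using hS ℓ₁ ℓ₂ w w).continuous

theorem lipschitzWith_of_norm_sub_le [NormedSpace ℝ X] (hκ : 0 < κ)
    (hS : ∀ ℓ₁ ℓ₂ w₁ w₂, κ * ‖S ℓ₁ w₁ - S ℓ₂ w₂‖ ≤ ‖ℓ₁ - ℓ₂‖ + c * ‖w₁ - w₂‖) (hc : 0 ≤ c)
    (γ : V →L[ℝ] X) {B : V → V →L[ℝ] ℝ} {LB : ℝ} (hB : ∀ v w, ‖B v - B w‖ ≤ LB * ‖v - w‖)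
    (ℓ : V →L[ℝ] ℝ) :
    LipschitzWith (Real.toNNReal ((LB + c * ‖γ‖) / κ)) fun u => S (ℓ - B u) (γ u) := by
  refine LipschitzWith.of_dist_le' fun u₁ u₂ => ?_
  rw [div_mul_eq_mul_div, le_div_iff₀' hκ, dist_eq_norm, dist_eq_norm]
  refine (hS _ _ _ _).trans ?_
  have h₁ : ‖ℓ - B u₁ - (ℓ - B u₂)‖ ≤ LB * ‖u₁ - u₂‖ := by
    rw [sub_sub_sub_cancel_left, norm_sub_rev]
    exact hB u₁ u₂
  have h₂ : ‖γ u₁ - γ u₂‖ ≤ ‖γ‖ * ‖u₁ - u₂‖ := by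
    rw [← map_sub]
    exact γ.le_opNorm _
  nlinarith [mul_le_mul_of_nonneg_left h₂ hc]

end SolutionMap

section IntegralEquation

variable {E : Type*} {T : ℝ} (hT : 0 ≤ T)

theorem dist_iterate_apply_le_of_dist_le_integral [MetricSpace E]
    {Φ : C(Icc 0 T, E) → C(Icc 0 T, E)} {K : ℝ≥0}
    (hΦ : ∀ g g' (t : Icc 0 T), dist (Φ g t) (Φ g' t) ≤
      K * ∫ s in (0 : ℝ)..t, dist (IccExtend hT g s) (IccExtend hT g' s))
    (g g' : C(Icc 0 T, E)) (n : ℕ) (t : Icc 0 T) :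
    dist ((Φ^[n] g) t) ((Φ^[n] g') t) ≤ (K * t) ^ n / n.factorial * dist g g' := by
  induction n generalizing t with
  | zero => simpa using ContinuousMap.dist_apply_le_dist t
  | succ n ih =>
    rw [Function.iterate_succ_apply', Function.iterate_succ_apply']
    refine (hΦ _ _ t).trans ?_
    have hint : ∫ s in (0 : ℝ)..t,
        dist (IccExtend hT (Φ^[n] g) s) (IccExtend hT (Φ^[n] g') s) ≤
        ∫ s in (0 : ℝ)..t, K ^ n / n.factorial * dist g g' * s ^ n := by
      refine intervalIntegral.integral_mono_on t.2.1 ?_ ?_ fun s hs => ?_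
      · exact (Continuous.dist (Φ^[n] g).continuous.Icc_extend'
          (Φ^[n] g').continuous.Icc_extend').intervalIntegrable _ _
      · exact (continuous_const.mul (continuous_pow n)).intervalIntegrable _ _
      · have hsT : s ∈ Icc 0 T := ⟨hs.1, hs.2.trans t.2.2⟩
        rw [IccExtend_of_mem hT _ hsT, IccExtend_of_mem hT _ hsT]
        exact (ih ⟨s, hsT⟩).trans_eq (by simp only [mul_pow]; ring)
    refine (mul_le_mul_of_nonneg_left hint K.coe_nonneg).trans_eq ?_
    rw [intervalIntegral.integral_const_mul, integral_pow, Nat.factorial_succ]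
    push_cast
    rw [zero_pow n.succ_ne_zero, sub_zero]
    field_simp
    ring

theorem exists_unique_fixedPoint_of_dist_le_integral [MetricSpace E] [Nonempty E]
    [CompleteSpace E] {Φ : C(Icc 0 T, E) → C(Icc 0 T, E)} {K : ℝ≥0}
    (hΦ : ∀ g g' (t : Icc 0 T), dist (Φ g t) (Φ g' t) ≤
      K * ∫ s in (0 : ℝ)..t, dist (IccExtend hT g s) (IccExtend hT g' s)) :
    ∃! g, Φ g = g := by
  obtain ⟨n, hn⟩ := ((FloorSemiring.tendsto_pow_div_factorial_atTop (K * T : ℝ)).eventually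
    (gt_mem_nhds one_pos)).exists
  have hc : 0 ≤ (K * T : ℝ) ^ n / n.factorial := by positivity
  have hcontr : ContractingWith ⟨_, hc⟩ Φ^[n] := by
    refine ⟨hn, LipschitzWith.of_dist_le_mul fun g g' =>
      (ContinuousMap.dist_le (by positivity)).mpr fun t => ?_⟩
    refine (dist_iterate_apply_le_of_dist_le_integral hT hΦ g g' n t).trans ?_
    show _ ≤ (K * T : ℝ) ^ n / n.factorial * _
    gcongr
    · exact mul_nonneg K.coe_nonneg t.2.1
    · exact t.2.2
  have : Nonempty C(Icc 0 T, E) := ⟨.const _ (Classical.arbitrary E)⟩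
  exact ⟨_, hcontr.isFixedPt_fixedPoint_iterate,
    fun g hg => hcontr.fixedPoint_unique (Function.IsFixedPt.iterate hg n)⟩

variable [NormedAddCommGroup E] [NormedSpace ℝ E] {F : ℝ → E → E}

noncomputable def integralEquationMap
    (hF : ContinuousOn (fun p : E × ℝ => F p.2 p.1) (univ ×ˢ Icc 0 T)) (u₀ : E)
    (g : C(Icc 0 T, E)) : C(Icc 0 T, E) where
  toFun t := F t ((∫ s in (0 : ℝ)..t, IccExtend hT g s) + u₀)
  continuous_toFun := by
    have hprim : Continuous fun t : ℝ => (∫ s in (0 : ℝ)..t, IccExtend hT g s) + u₀ :=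
      (intervalIntegral.continuous_primitive
        (fun a b => g.continuous.Icc_extend'.intervalIntegrable a b) 0).add continuous_const
    exact hF.comp_continuous ((hprim.comp continuous_subtype_val).prodMk continuous_subtype_val)
      fun t => ⟨mem_univ _, t.2⟩

theorem dist_integralEquationMap_le
    (hF : ContinuousOn (fun p : E × ℝ => F p.2 p.1) (univ ×ˢ Icc 0 T)) (u₀ : E) {K : ℝ≥0}
    (hFu : ∀ t, LipschitzWith K (F t)) (g g' : C(Icc 0 T, E)) (t : Icc 0 T) :
    dist (integralEquationMap hT hF u₀ g t) (integralEquationMap hT hF u₀ g' t) ≤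
      K * ∫ s in (0 : ℝ)..t, dist (IccExtend hT g s) (IccExtend hT g' s) := by
  refine ((hFu t).dist_le_mul _ _).trans (mul_le_mul_of_nonneg_left ?_ K.coe_nonneg)
  rw [dist_add_right, dist_eq_norm, ← intervalIntegral.integral_sub
    (g.continuous.Icc_extend'.intervalIntegrable _ _)
    (g'.continuous.Icc_extend'.intervalIntegrable _ _)]
  simpa only [dist_eq_norm] using intervalIntegral.norm_integral_le_integral_norm t.2.1

theorem exists_unique_integral_equation [CompleteSpace E] (hT : 0 ≤ T) {K : ℝ≥0}
    (hFt : ∀ u, ContinuousOn (F · u) (Icc 0 T)) (hFu : ∀ t, LipschitzWith K (F t)) (u₀ : E) :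
    ∃ v : ℝ → E,
      (ContinuousOn v (Icc 0 T) ∧ ∀ t ∈ Icc 0 T, v t = F t ((∫ s in (0 : ℝ)..t, v s) + u₀)) ∧
      ∀ v' : ℝ → E,
        (ContinuousOn v' (Icc 0 T) ∧ ∀ t ∈ Icc 0 T, v' t = F t ((∫ s in (0 : ℝ)..t, v' s) + u₀)) →
        ∀ t ∈ Icc 0 T, v' t = v t := by
  have hF : ContinuousOn (fun p : E × ℝ => F p.2 p.1) (univ ×ˢ Icc 0 T) :=
    continuousOn_prod_of_continuousOn_lipschitzOnWith _ K (fun u _ => hFt u)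
      fun t _ => (hFu t).lipschitzOnWith
  obtain ⟨x, hx, hxu⟩ := exists_unique_fixedPoint_of_dist_le_integral hT
    (dist_integralEquationMap_le hT hF u₀ hFu)
  refine ⟨IccExtend hT x, ⟨x.continuous.Icc_extend'.continuousOn, fun t ht => ?_⟩,
    fun v' ⟨hv'c, hv'⟩ t ht => ?_⟩
  · rw [IccExtend_of_mem hT x ht]
    exact (DFunLike.congr_fun hx ⟨t, ht⟩).symm
  · set g' : C(Icc 0 T, E) := ⟨(Icc 0 T).domRestrict v', hv'c.domRestrict⟩
    have hint : ∀ t ∈ Icc 0 T, ∫ s in (0 : ℝ)..t, IccExtend hT g' s = ∫ s in (0 : ℝ)..t, v' s :=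
      fun t ht => intervalIntegral.integral_congr fun s hs => by
        rw [uIcc_of_le ht.1] at hs
        exact IccExtend_of_mem hT g' ⟨hs.1, hs.2.trans ht.2⟩
    have hg' : integralEquationMap hT hF u₀ g' = g' := by
      ext s
      exact ((hint s s.2).symm ▸ hv' s s.2).symm
    rw [IccExtend_of_mem hT x ht, ← hxu g' hg']
    rfl

end IntegralEquation

theorem existence_uniqueness_Phvi_general
    {V X : Type*}
    [NormedAddCommGroup V] [NormedSpace ℝ V] [CompleteSpace V]
    [NormedAddCommGroup X] [NormedSpace ℝ X]
    (γ : V →L[ℝ] X)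
    -- H(A)
    (A : V →L[ℝ] V →L[ℝ] ℝ)
    (hAsym : ∀ u v : V, A u v = A v u)
    (mA : ℝ)
    (hAco : ∀ u : V, mA * ‖u‖ ^ 2 ≤ A u u)
    -- H(B)
    (B : V → V →L[ℝ] ℝ)
    (LB : ℝ)
    (hB : ∀ v w : V, ‖B v - B w‖ ≤ LB * ‖v - w‖)
    -- H(J)
    (J : X → X → ℝ)
    (hJa : ∀ w : X, LocallyLipschitz (J w))
    (mJ1 mJ2 : ℝ) (hmJ1 : 0 ≤ mJ1) (hmJ2 : 0 ≤ mJ2)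
    (hJc : ∀ w₁ w₂ v₁ v₂ : X,
      clarkeDeriv (J w₁) v₁ (v₂ - v₁) + clarkeDeriv (J w₂) v₂ (v₁ - v₂) ≤
        mJ1 * ‖v₁ - v₂‖ ^ 2 + mJ2 * ‖w₁ - w₂‖ * ‖v₁ - v₂‖)
    -- H(f)
    (T : ℝ) (hT : 0 < T)
    (f : ℝ → V →L[ℝ] ℝ) (hf : ContinuousOn f (Set.Icc 0 T))
    -- H(u₀)
    (u₀ : V)
    -- (H_s)
    (hs : 0 < mA - 2 * mJ1 * ‖γ‖ ^ 2) :
    ∃ v : ℝ → V,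
      (ContinuousOn v (Set.Icc 0 T) ∧
        ∀ t ∈ Set.Icc (0 : ℝ) T, ∀ w : V,
          f t w ≤ A (v t) w + B ((∫ s in (0 : ℝ)..t, v s) + u₀) w +
            clarkeDeriv (J (γ ((∫ s in (0 : ℝ)..t, v s) + u₀))) (γ (v t)) (γ w)) ∧
      ∀ v' : ℝ → V,
        (ContinuousOn v' (Set.Icc 0 T) ∧
          ∀ t ∈ Set.Icc (0 : ℝ) T, ∀ w : V,
            f t w ≤ A (v' t) w + B ((∫ s in (0 : ℝ)..t, v' s) + u₀) w +
              clarkeDeriv (J (γ ((∫ s in (0 : ℝ)..t, v' s) + u₀))) (γ (v' t)) (γ w)) →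
        ∀ t ∈ Set.Icc (0 : ℝ) T, v' t = v t := by
  set κ := mA - mJ1 * ‖γ‖ ^ 2
  have hκ : 0 < κ := by nlinarith [mul_nonneg hmJ1 (sq_nonneg ‖γ‖)]
  have hJm : ∀ w, ClarkeRelaxedMonotone (J w) mJ1 := fun w p q => by simpa using hJc w w p q
  choose S hS using fun (ℓ : V →L[ℝ] ℝ) (w : X) =>
    exists_isHVISolution (γ := γ) (ℓ := ℓ) hAsym hAco (hJa w) (hJm w) hmJ1 hκ
  have hSlip : ∀ ℓ₁ ℓ₂ w₁ w₂, κ * ‖S ℓ₁ w₁ - S ℓ₂ w₂‖ ≤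
      ‖ℓ₁ - ℓ₂‖ + mJ2 * ‖γ‖ * ‖w₁ - w₂‖ := fun ℓ₁ ℓ₂ w₁ w₂ =>
    (hS ℓ₁ w₁).norm_sub_le hAco hmJ1 hmJ2 hJc (hS ℓ₂ w₂)
  obtain ⟨v, ⟨hvc, hv⟩, huniq⟩ := exists_unique_integral_equation hT.le
    (fun u => (continuous_left_of_norm_sub_le hκ hSlip (γ u)).comp_continuousOn
      (hf.sub continuousOn_const))
    (fun t => lipschitzWith_of_norm_sub_le hκ hSlip (by positivity) γ hB (f t)) u₀
  refine ⟨v, ⟨hvc, fun t ht => ?_⟩, fun v' ⟨hv'c, hv'⟩ => huniq v' ⟨hv'c, fun t ht => ?_⟩⟩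
  · rw [hv t ht]
    exact isHVISolution_sub_iff.mp (hS _ _)
  · exact (isHVISolution_sub_iff.mpr (hv' t ht)).unique hAco (hJm _) hmJ1 hκ (hS _ _)

/-- Under H(A), H(B), H(J), H(f), H(u₀) and (H_s), Problem `P_hvi`
has a unique continuous solution `v : [0,T] → V`. -/
theorem existence_uniqueness_Phvi
    {V X : Type*}
    [NormedAddCommGroup V] [NormedSpace ℝ V] [CompleteSpace V]
    [NormedAddCommGroup X] [NormedSpace ℝ X] [CompleteSpace X]
    -- V reflexive
    (hrefl : Function.Surjective (NormedSpace.inclusionInDoubleDual ℝ V))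
    (γ : V →L[ℝ] X)
    -- H(A)
    (A : V →L[ℝ] V →L[ℝ] ℝ)
    (hAsym : ∀ u v : V, A u v = A v u)
    (mA : ℝ) (hmA : 0 < mA)
    (hAco : ∀ u : V, mA * ‖u‖ ^ 2 ≤ A u u)
    -- H(B)
    (B : V → V →L[ℝ] ℝ)
    (LB : ℝ) (hLB : 0 < LB)
    (hB : ∀ v w : V, ‖B v - B w‖ ≤ LB * ‖v - w‖)
    -- H(J)
    (J : X → X → ℝ)
    (hJa : ∀ w : X, LocallyLipschitz (J w))
    (c₀ c₁ c₂ : ℝ) (hc₀ : 0 ≤ c₀) (hc₁ : 0 ≤ c₁) (hc₂ : 0 ≤ c₂)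
    (hJb : ∀ w v : X, ∀ ξ ∈ clarkeSubdiff (J w) v, ‖ξ‖ ≤ c₀ + c₁ * ‖w‖ + c₂ * ‖v‖)
    (mJ1 mJ2 : ℝ) (hmJ1 : 0 ≤ mJ1) (hmJ2 : 0 ≤ mJ2)
    (hJc : ∀ w₁ w₂ v₁ v₂ : X,
      clarkeDeriv (J w₁) v₁ (v₂ - v₁) + clarkeDeriv (J w₂) v₂ (v₁ - v₂) ≤
        mJ1 * ‖v₁ - v₂‖ ^ 2 + mJ2 * ‖w₁ - w₂‖ * ‖v₁ - v₂‖)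
    -- H(f)
    (T : ℝ) (hT : 0 < T)
    (f : ℝ → V →L[ℝ] ℝ) (hf : ContinuousOn f (Set.Icc 0 T))
    -- H(u₀)
    (u₀ : V)
    -- (H_s)
    (hs : 0 < mA - 2 * mJ1 * ‖γ‖ ^ 2) :
    ∃ v : ℝ → V,
      (ContinuousOn v (Set.Icc 0 T) ∧
        ∀ t ∈ Set.Icc (0 : ℝ) T, ∀ w : V,
          f t w ≤ A (v t) w + B ((∫ s in (0 : ℝ)..t, v s) + u₀) w +
            clarkeDeriv (J (γ ((∫ s in (0 : ℝ)..t, v s) + u₀))) (γ (v t)) (γ w)) ∧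
      ∀ v' : ℝ → V,
        (ContinuousOn v' (Set.Icc 0 T) ∧
          ∀ t ∈ Set.Icc (0 : ℝ) T, ∀ w : V,
            f t w ≤ A (v' t) w + B ((∫ s in (0 : ℝ)..t, v' s) + u₀) w +
              clarkeDeriv (J (γ ((∫ s in (0 : ℝ)..t, v' s) + u₀))) (γ (v' t)) (γ w)) →
        ∀ t ∈ Set.Icc (0 : ℝ) T, v' t = v t :=
  existence_uniqueness_Phvi_general γ A hAsym mA hAco B LB hB J hJa mJ1 mJ2 hmJ1 hmJ2 hJc T hT f hf
    u₀ hs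
end

section
/- Assume H(A), H(B) and H(J)(a),(c). Let y₁, y₂ ∈ V and f₁, f₂ ∈ V*, and suppose v₁, v₂ ∈ V satisfy, for i = 1, 2 and all w ∈ V, ⟨A v_i, w⟩ + J₂⁰(γ y_i, γ v_i; γ w) ≥ ⟨f_i − B y_i, w⟩. Then (m_A − m_{J1} c_γ²) ‖v₁ − v₂‖_V ≤ ‖f₁ − f₂‖_{V*} + (m_{J2} c_γ² + L_B) ‖y₁ − y₂‖_V. -/
open Filter MeasureTheory Set

set_option maxHeartbeats 1600000 in
/-- Continuous dependence of the solution of the auxiliary time-frozen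
inequality on the data `(y, f)`. -/
theorem auxiliary_continuous_dependence
    {V X : Type*}
    [NormedAddCommGroup V] [NormedSpace ℝ V] [CompleteSpace V]
    [NormedAddCommGroup X] [NormedSpace ℝ X] [CompleteSpace X]
    (γ : V →L[ℝ] X)
    -- H(A)
    (A : V →L[ℝ] V →L[ℝ] ℝ)
    (hAsym : ∀ u v : V, A u v = A v u)
    (mA : ℝ) (hmA : 0 < mA)
    (hAco : ∀ u : V, mA * ‖u‖ ^ 2 ≤ A u u)
    -- H(B)
    (B : V → V →L[ℝ] ℝ)
    (LB : ℝ) (hLB : 0 < LB)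
    (hB : ∀ v w : V, ‖B v - B w‖ ≤ LB * ‖v - w‖)
    -- H(J)(a),(c)
    (J : X → X → ℝ)
    (hJa : ∀ w : X, LocallyLipschitz (J w))
    (mJ1 mJ2 : ℝ) (hmJ1 : 0 ≤ mJ1) (hmJ2 : 0 ≤ mJ2)
    (hJc : ∀ w₁ w₂ v₁ v₂ : X,
      clarkeDeriv (J w₁) v₁ (v₂ - v₁) + clarkeDeriv (J w₂) v₂ (v₁ - v₂) ≤
        mJ1 * ‖v₁ - v₂‖ ^ 2 + mJ2 * ‖w₁ - w₂‖ * ‖v₁ - v₂‖)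
    -- data and solutions
    (y₁ y₂ : V) (f₁ f₂ : V →L[ℝ] ℝ) (v₁ v₂ : V)
    (h₁ : ∀ w : V, (f₁ - B y₁) w ≤ A v₁ w + clarkeDeriv (J (γ y₁)) (γ v₁) (γ w))
    (h₂ : ∀ w : V, (f₂ - B y₂) w ≤ A v₂ w + clarkeDeriv (J (γ y₂)) (γ v₂) (γ w)) :
    (mA - mJ1 * ‖γ‖ ^ 2) * ‖v₁ - v₂‖ ≤
      ‖f₁ - f₂‖ + (mJ2 * ‖γ‖ ^ 2 + LB) * ‖y₁ - y₂‖ := by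
  set e := v₁ - v₂ with he
  have H1 := h₁ (v₂ - v₁)
  have H2 := h₂ (v₁ - v₂)
  have hJ := hJc (γ y₁) (γ y₂) (γ v₁) (γ v₂)
  rw [map_sub γ v₂ v₁] at H1
  rw [map_sub γ v₁ v₂] at H2
  have hAe : A e = A v₁ - A v₂ := map_sub A v₁ v₂
  have hAee : A e e = A v₁ v₁ - A v₁ v₂ - (A v₂ v₁ - A v₂ v₂) := by
    rw [hAe]
    simp only [ContinuousLinearMap.sub_apply]
    rw [he, map_sub (A v₁), map_sub (A v₂)]
  have hco := hAco e
  have e1 : (f₁ - B y₁) (v₂ - v₁) = f₁ v₂ - f₁ v₁ - (B y₁ v₂ - B y₁ v₁) := by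
    simp only [ContinuousLinearMap.sub_apply, map_sub]; ring
  have e2 : (f₂ - B y₂) (v₁ - v₂) = f₂ v₁ - f₂ v₂ - (B y₂ v₁ - B y₂ v₂) := by
    simp only [ContinuousLinearMap.sub_apply, map_sub]; ring
  have eA1 : A v₁ (v₂ - v₁) = A v₁ v₂ - A v₁ v₁ := map_sub (A v₁) v₂ v₁
  have eA2 : A v₂ (v₁ - v₂) = A v₂ v₁ - A v₂ v₂ := map_sub (A v₂) v₁ v₂
  rw [e1, eA1] at H1
  rw [e2, eA2] at H2
  have hγe : ‖γ v₁ - γ v₂‖ ≤ ‖γ‖ * ‖e‖ := by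
    rw [← map_sub]; exact γ.le_opNorm e
  have hγy : ‖γ y₁ - γ y₂‖ ≤ ‖γ‖ * ‖y₁ - y₂‖ := by
    rw [← map_sub]; exact γ.le_opNorm (y₁ - y₂)
  have hn1 : (0:ℝ) ≤ ‖γ v₁ - γ v₂‖ := norm_nonneg _
  have hen : (0:ℝ) ≤ ‖e‖ := norm_nonneg _
  have hf : f₁ v₁ - f₁ v₂ - (f₂ v₁ - f₂ v₂) ≤ ‖f₁ - f₂‖ * ‖e‖ := by
    have h1 : ‖(f₁ - f₂) e‖ ≤ ‖f₁ - f₂‖ * ‖e‖ := (f₁ - f₂).le_opNorm e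
    have h2 : (f₁ - f₂) e = f₁ v₁ - f₁ v₂ - (f₂ v₁ - f₂ v₂) := by
      rw [he]; simp only [ContinuousLinearMap.sub_apply, map_sub]; ring
    calc f₁ v₁ - f₁ v₂ - (f₂ v₁ - f₂ v₂) = (f₁ - f₂) e := h2.symm
      _ ≤ |((f₁ - f₂) e)| := le_abs_self _
      _ = ‖(f₁ - f₂) e‖ := rfl
      _ ≤ ‖f₁ - f₂‖ * ‖e‖ := h1
  have hBb : B y₂ v₁ - B y₂ v₂ - (B y₁ v₁ - B y₁ v₂) ≤ LB * ‖y₁ - y₂‖ * ‖e‖ := by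
    have h1 : ‖(B y₂ - B y₁) e‖ ≤ ‖B y₂ - B y₁‖ * ‖e‖ := (B y₂ - B y₁).le_opNorm e
    have h2 : (B y₂ - B y₁) e = B y₂ v₁ - B y₂ v₂ - (B y₁ v₁ - B y₁ v₂) := by
      rw [he]; simp only [ContinuousLinearMap.sub_apply, map_sub]; ring
    have h3 : ‖B y₂ - B y₁‖ ≤ LB * ‖y₁ - y₂‖ := by
      have := hB y₂ y₁
      rwa [norm_sub_rev y₂ y₁] at this
    calc B y₂ v₁ - B y₂ v₂ - (B y₁ v₁ - B y₁ v₂) = (B y₂ - B y₁) e := h2.symm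
      _ ≤ |((B y₂ - B y₁) e)| := le_abs_self _
      _ = ‖(B y₂ - B y₁) e‖ := rfl
      _ ≤ ‖B y₂ - B y₁‖ * ‖e‖ := h1
      _ ≤ LB * ‖y₁ - y₂‖ * ‖e‖ := mul_le_mul_of_nonneg_right h3 hen
  have hJ1 : mJ1 * ‖γ v₁ - γ v₂‖ ^ 2 ≤ mJ1 * ‖γ‖ ^ 2 * ‖e‖ ^ 2 := by
    have h := mul_le_mul_of_nonneg_left (pow_le_pow_left₀ hn1 hγe 2) hmJ1
    rw [mul_pow] at h
    linarith [h]
  have hJ2 : mJ2 * ‖γ y₁ - γ y₂‖ * ‖γ v₁ - γ v₂‖ ≤ mJ2 * ‖γ‖ ^ 2 * ‖y₁ - y₂‖ * ‖e‖ := by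
    have h : ‖γ y₁ - γ y₂‖ * ‖γ v₁ - γ v₂‖ ≤ (‖γ‖ * ‖y₁ - y₂‖) * (‖γ‖ * ‖e‖) :=
      mul_le_mul hγy hγe hn1 (by positivity)
    have h2 := mul_le_mul_of_nonneg_left h hmJ2
    calc mJ2 * ‖γ y₁ - γ y₂‖ * ‖γ v₁ - γ v₂‖
        = mJ2 * (‖γ y₁ - γ y₂‖ * ‖γ v₁ - γ v₂‖) := by ring
      _ ≤ mJ2 * ((‖γ‖ * ‖y₁ - y₂‖) * (‖γ‖ * ‖e‖)) := h2
      _ = mJ2 * ‖γ‖ ^ 2 * ‖y₁ - y₂‖ * ‖e‖ := by ring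
  have key : (mA - mJ1 * ‖γ‖ ^ 2) * ‖e‖ * ‖e‖ ≤
      (‖f₁ - f₂‖ + (mJ2 * ‖γ‖ ^ 2 + LB) * ‖y₁ - y₂‖) * ‖e‖ := by
    have hsq : ‖e‖ ^ 2 = ‖e‖ * ‖e‖ := sq ‖e‖
    nlinarith [H1, H2, hJ, hco, hAee, hf, hBb, hJ1, hJ2]
  rcases eq_or_lt_of_le hen with h0 | hpos
  · rw [← h0]
    have hr : (0:ℝ) ≤ ‖f₁ - f₂‖ + (mJ2 * ‖γ‖ ^ 2 + LB) * ‖y₁ - y₂‖ := by positivity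
    linarith
  · exact le_of_mul_le_mul_right key hpos
end

section
/- Assume H(A), H(B), H(J)(a),(c), H(u₀) and (H_s). Let η₁, η₂ ∈ C([0,T];V) and suppose that v₁, v₂: [0,T] → V satisfy, for i = 1, 2, all t ∈ [0,T] and all w ∈ V, ⟨A v_i(t), w⟩ + J₂⁰(γ (Kη_i)(t), γ v_i(t); γ w) ≥ ⟨f(t) − B (Kη_i)(t), w⟩. Then with c = (m_{J2} c_γ² + L_B)/(m_A − m_{J1} c_γ²) one has ‖v₁(t) − v₂(t)‖_V ≤ c ∫₀ᵗ ‖η₁(s) − η₂(s)‖_V ds for all t ∈ [0,T]; i.e. the map η ↦ v_η is a history-dependent operator. -/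
open Filter MeasureTheory Set

/-- The map `η ↦ v_η` is a history-dependent operator: with
`c = (m_{J2}c_γ² + L_B)/(m_A − m_{J1}c_γ²)`,
`‖v₁(t) − v₂(t)‖ ≤ c ∫₀ᵗ ‖η₁(s) − η₂(s)‖ ds` for all `t ∈ [0,T]`. -/
theorem history_dependent_operator
    {V X : Type*}
    [NormedAddCommGroup V] [NormedSpace ℝ V] [CompleteSpace V]
    [NormedAddCommGroup X] [NormedSpace ℝ X] [CompleteSpace X]
    (γ : V →L[ℝ] X)
    -- H(A)
    (A : V →L[ℝ] V →L[ℝ] ℝ)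
    (hAsym : ∀ u v : V, A u v = A v u)
    (mA : ℝ) (hmA : 0 < mA)
    (hAco : ∀ u : V, mA * ‖u‖ ^ 2 ≤ A u u)
    -- H(B)
    (B : V → V →L[ℝ] ℝ)
    (LB : ℝ) (hLB : 0 < LB)
    (hB : ∀ v w : V, ‖B v - B w‖ ≤ LB * ‖v - w‖)
    -- H(J)(a),(c)
    (J : X → X → ℝ)
    (hJa : ∀ w : X, LocallyLipschitz (J w))
    (mJ1 mJ2 : ℝ) (hmJ1 : 0 ≤ mJ1) (hmJ2 : 0 ≤ mJ2)
    (hJc : ∀ w₁ w₂ v₁ v₂ : X,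
      clarkeDeriv (J w₁) v₁ (v₂ - v₁) + clarkeDeriv (J w₂) v₂ (v₁ - v₂) ≤
        mJ1 * ‖v₁ - v₂‖ ^ 2 + mJ2 * ‖w₁ - w₂‖ * ‖v₁ - v₂‖)
    -- H(u₀), H(f)
    (T : ℝ) (hT : 0 < T)
    (f : ℝ → V →L[ℝ] ℝ) (hf : ContinuousOn f (Set.Icc 0 T))
    (u₀ : V)
    -- (H_s)
    (hs : 0 < mA - 2 * mJ1 * ‖γ‖ ^ 2)
    -- the inputs η₁, η₂ and the corresponding solutions v₁, v₂
    (η₁ η₂ : ℝ → V)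
    (hη₁ : ContinuousOn η₁ (Set.Icc 0 T)) (hη₂ : ContinuousOn η₂ (Set.Icc 0 T))
    (v₁ v₂ : ℝ → V)
    (h₁ : ∀ t ∈ Set.Icc (0 : ℝ) T, ∀ w : V,
      (f t - B ((∫ s in (0 : ℝ)..t, η₁ s) + u₀)) w ≤
        A (v₁ t) w +
          clarkeDeriv (J (γ ((∫ s in (0 : ℝ)..t, η₁ s) + u₀))) (γ (v₁ t)) (γ w))
    (h₂ : ∀ t ∈ Set.Icc (0 : ℝ) T, ∀ w : V,
      (f t - B ((∫ s in (0 : ℝ)..t, η₂ s) + u₀)) w ≤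
        A (v₂ t) w +
          clarkeDeriv (J (γ ((∫ s in (0 : ℝ)..t, η₂ s) + u₀))) (γ (v₂ t)) (γ w)) :
    ∀ t ∈ Set.Icc (0 : ℝ) T,
      ‖v₁ t - v₂ t‖ ≤ ((mJ2 * ‖γ‖ ^ 2 + LB) / (mA - mJ1 * ‖γ‖ ^ 2)) *
        ∫ s in (0 : ℝ)..t, ‖η₁ s - η₂ s‖ := by
  intro t ht
  obtain ⟨ht0, htT⟩ := ht
  set u₁ : V := (∫ s in (0 : ℝ)..t, η₁ s) + u₀ with hu₁
  set u₂ : V := (∫ s in (0 : ℝ)..t, η₂ s) + u₀ with hu₂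
  set d : V := v₁ t - v₂ t with hd
  have hγ2 : (0 : ℝ) ≤ ‖γ‖ ^ 2 := by positivity
  have hden : 0 < mA - mJ1 * ‖γ‖ ^ 2 := by nlinarith
  have hc : 0 ≤ (mJ2 * ‖γ‖ ^ 2 + LB) / (mA - mJ1 * ‖γ‖ ^ 2) := by
    apply div_nonneg _ hden.le; nlinarith
  -- integrability
  have hsub : Set.uIcc (0 : ℝ) t ⊆ Set.Icc 0 T := by
    rw [Set.uIcc_of_le ht0]; exact Set.Icc_subset_Icc le_rfl htT
  have hint₁ : IntervalIntegrable η₁ volume 0 t :=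
    (hη₁.mono hsub).intervalIntegrable
  have hint₂ : IntervalIntegrable η₂ volume 0 t :=
    (hη₂.mono hsub).intervalIntegrable
  have hI0 : (0 : ℝ) ≤ ∫ s in (0 : ℝ)..t, ‖η₁ s - η₂ s‖ :=
    intervalIntegral.integral_nonneg ht0 (fun s _ => norm_nonneg _)
  -- bound ‖u₁ - u₂‖ by the integral of norms
  have hb : ‖u₁ - u₂‖ ≤ ∫ s in (0 : ℝ)..t, ‖η₁ s - η₂ s‖ := by
    have : u₁ - u₂ = ∫ s in (0 : ℝ)..t, (η₁ s - η₂ s) := by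
      rw [intervalIntegral.integral_sub hint₁ hint₂, hu₁, hu₂]; abel
    rw [this]
    exact intervalIntegral.norm_integral_le_integral_norm ht0
  -- key inequality
  have h1 := h₁ t ⟨ht0, htT⟩ (v₂ t - v₁ t)
  have h2 := h₂ t ⟨ht0, htT⟩ (v₁ t - v₂ t)
  have hJ := hJc (γ u₁) (γ u₂) (γ (v₁ t)) (γ (v₂ t))
  rw [show γ (v₂ t) - γ (v₁ t) = γ (v₂ t - v₁ t) from (map_sub γ _ _).symm,
      show γ (v₁ t) - γ (v₂ t) = γ (v₁ t - v₂ t) from (map_sub γ _ _).symm] at hJ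
  have hγv : ‖γ (v₁ t - v₂ t)‖ ≤ ‖γ‖ * ‖d‖ := by
    rw [← hd]; exact γ.le_opNorm d
  have hγu : ‖γ u₁ - γ u₂‖ ≤ ‖γ‖ * ‖u₁ - u₂‖ := by
    rw [← map_sub]; exact γ.le_opNorm _
  have hJbound : mJ1 * ‖γ (v₁ t - v₂ t)‖ ^ 2 +
      mJ2 * ‖γ u₁ - γ u₂‖ * ‖γ (v₁ t - v₂ t)‖ ≤
      mJ1 * ‖γ‖ ^ 2 * ‖d‖ ^ 2 + mJ2 * ‖γ‖ ^ 2 * ‖u₁ - u₂‖ * ‖d‖ := by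
    have h0 : (0 : ℝ) ≤ ‖γ (v₁ t - v₂ t)‖ := norm_nonneg _
    have e1 : mJ1 * ‖γ (v₁ t - v₂ t)‖ ^ 2 ≤ mJ1 * (‖γ‖ * ‖d‖) ^ 2 :=
      mul_le_mul_of_nonneg_left (pow_le_pow_left₀ h0 hγv 2) hmJ1
    have e2 : mJ2 * ‖γ u₁ - γ u₂‖ * ‖γ (v₁ t - v₂ t)‖ ≤
        mJ2 * (‖γ‖ * ‖u₁ - u₂‖) * (‖γ‖ * ‖d‖) :=
      mul_le_mul (mul_le_mul_of_nonneg_left hγu hmJ2) hγv h0 (by positivity)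
    calc mJ1 * ‖γ (v₁ t - v₂ t)‖ ^ 2 + mJ2 * ‖γ u₁ - γ u₂‖ * ‖γ (v₁ t - v₂ t)‖
        ≤ mJ1 * (‖γ‖ * ‖d‖) ^ 2 + mJ2 * (‖γ‖ * ‖u₁ - u₂‖) * (‖γ‖ * ‖d‖) := by
          linarith
      _ = mJ1 * ‖γ‖ ^ 2 * ‖d‖ ^ 2 + mJ2 * ‖γ‖ ^ 2 * ‖u₁ - u₂‖ * ‖d‖ := by ring
  -- expand the bilinear form terms
  have hA : A (v₁ t) (v₂ t - v₁ t) + A (v₂ t) (v₁ t - v₂ t) = -(A d d) := by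
    simp only [hd, map_sub, ContinuousLinearMap.sub_apply]
    rw [hAsym (v₁ t) (v₂ t)]
    ring
  -- expand the linear functionals
  have hfB1 : (f t - B u₁) (v₂ t - v₁ t) = f t (v₂ t - v₁ t) - B u₁ (v₂ t - v₁ t) :=
    rfl
  have hfB2 : (f t - B u₂) (v₁ t - v₂ t) = f t (v₁ t - v₂ t) - B u₂ (v₁ t - v₂ t) :=
    rfl
  have hneg : v₂ t - v₁ t = -(v₁ t - v₂ t) := by abel
  have hf0 : f t (v₂ t - v₁ t) = -(f t (v₁ t - v₂ t)) := by rw [hneg, map_neg]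
  have hB1 : B u₁ (v₂ t - v₁ t) = -(B u₁ d) := by rw [hneg, map_neg, hd]
  have hB2 : B u₂ (v₁ t - v₂ t) = B u₂ d := by rw [hd]
  -- bound the B difference
  have hBd : B u₂ d - B u₁ d ≤ LB * ‖u₁ - u₂‖ * ‖d‖ := by
    have h1' : B u₂ d - B u₁ d = (B u₂ - B u₁) d := by
      simp [ContinuousLinearMap.sub_apply]
    rw [h1']
    calc (B u₂ - B u₁) d ≤ ‖(B u₂ - B u₁) d‖ := le_abs_self _
      _ ≤ ‖B u₂ - B u₁‖ * ‖d‖ := (B u₂ - B u₁).le_opNorm d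
      _ ≤ LB * ‖u₁ - u₂‖ * ‖d‖ := by
          rw [show ‖u₁ - u₂‖ = ‖u₂ - u₁‖ from (norm_sub_rev _ _)]
          exact mul_le_mul_of_nonneg_right (hB u₂ u₁) (norm_nonneg _)
  have hcoerc := hAco d
  have key : (mA - mJ1 * ‖γ‖ ^ 2) * ‖d‖ ^ 2 ≤
      (mJ2 * ‖γ‖ ^ 2 + LB) * ‖u₁ - u₂‖ * ‖d‖ := by
    rw [hfB1] at h1; rw [hfB2] at h2
    have : (mA - mJ1 * ‖γ‖ ^ 2) * ‖d‖ ^ 2 =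
        mA * ‖d‖ ^ 2 - mJ1 * ‖γ‖ ^ 2 * ‖d‖ ^ 2 := by ring
    rw [this]
    have : (mJ2 * ‖γ‖ ^ 2 + LB) * ‖u₁ - u₂‖ * ‖d‖ =
        mJ2 * ‖γ‖ ^ 2 * ‖u₁ - u₂‖ * ‖d‖ + LB * ‖u₁ - u₂‖ * ‖d‖ := by ring
    rw [this]
    linarith
  -- conclude
  rcases eq_or_lt_of_le (norm_nonneg d) with hd0 | hd0
  · rw [← hd0]
    exact mul_nonneg hc hI0
  · have hstep : ‖d‖ ≤ ((mJ2 * ‖γ‖ ^ 2 + LB) / (mA - mJ1 * ‖γ‖ ^ 2)) * ‖u₁ - u₂‖ := by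
      rw [div_mul_eq_mul_div, le_div_iff₀ hden]
      have := key
      nlinarith [this, hd0]
    calc ‖d‖ ≤ ((mJ2 * ‖γ‖ ^ 2 + LB) / (mA - mJ1 * ‖γ‖ ^ 2)) * ‖u₁ - u₂‖ := hstep
      _ ≤ ((mJ2 * ‖γ‖ ^ 2 + LB) / (mA - mJ1 * ‖γ‖ ^ 2)) *
          ∫ s in (0 : ℝ)..t, ‖η₁ s - η₂ s‖ := mul_le_mul_of_nonneg_left hb hc
end
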